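/- Fix p ∈ (0,1/2], let K be a p-core CRG with optimizer μ (full support, white-vertex masses μ(u) = g_K(p)/p and black-vertex gray-degree identity d_G(u) = (p−g_K(p))/p + ((1−2p)/p)μ(u)). For each n, let G_n = K[μ,n] be the blow-up where vertex x is replaced by ⌊μ(x)·n⌋ vertices. Then lim_{n→∞} Δ_p(G_n)/|G_n| = g_K(p), where for a colored graph G, d_p(v) = Σ_u w_p(uv) with w_p = p on white edges, 1−p on black edges, 0 on gray edges, and Δ_p(G) = max_v d_p(v). -/

import Mathlib

open Finset

inductive EColor | white | black | gray
deriving DecidableEq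

/-- The `p`-weight of an edge color: `p` for white, `1-p` for black, `0` for gray. -/
def wval (p : ℝ) : EColor → ℝ
  | .white => p
  | .black => 1 - p
  | .gray => 0

/-- The matrix `M_K(p)` of a CRG given by vertex colors `vb` (`true` = black)
and edge colors `ec`. -/
def Mmat {V : Type*} [DecidableEq V] (vb : V → Bool) (ec : V → V → EColor) (p : ℝ)
    (x y : V) : ℝ :=
  if x = y then (if vb x then 1 - p else p) else wval p (ec x y)

/-- `μ` is a probability mass. -/
def IsProb {V : Type*} [Fintype V] (μ : V → ℝ) : Prop :=
  (∀ x, 0 ≤ μ x) ∧ ∑ x, μ x = 1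

/-- The quadratic form `⟨μ, M_K(p) μ⟩`. -/
def QF {V : Type*} [Fintype V] [DecidableEq V] (vb : V → Bool) (ec : V → V → EColor)
    (p : ℝ) (μ : V → ℝ) : ℝ :=
  ∑ x, ∑ y, μ x * Mmat vb ec p x y * μ y

/-- `g` is the minimum of the quadratic form over probability masses, i.e. `g = g_K(p)`. -/
def gIs {V : Type*} [Fintype V] [DecidableEq V] (vb : V → Bool) (ec : V → V → EColor)
    (p g : ℝ) : Prop :=
  IsLeast {t | ∃ μ : V → ℝ, IsProb μ ∧ t = QF vb ec p μ} g

/-- The weighted gray-degree `d_G(u) = ∑_{v : uv gray} μ(v)`. -/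
def grayDeg {V : Type*} [Fintype V] [DecidableEq V] (ec : V → V → EColor) (μ : V → ℝ)
    (u : V) : ℝ :=
  ∑ v ∈ Finset.univ.filter (fun v => v ≠ u ∧ ec u v = EColor.gray), μ v

/-- The blow-up `K[μ,n]` of a CRG, where vertex `x` is replaced by `⌊μ(x)·n⌋` vertices. -/
def sblow {V : Type*} [DecidableEq V] (vb : V → Bool) (ec : V → V → EColor) (μ : V → ℝ)
    (n : ℕ) : ((x : V) × Fin ⌊μ x * (n : ℝ)⌋₊) → ((x : V) × Fin ⌊μ x * (n : ℝ)⌋₊) → EColor :=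
  fun a b => if a.1 = b.1 then (if vb a.1 then EColor.black else EColor.white)
    else ec a.1 b.1

/-- The `p`-degree of a vertex of a colored graph. -/
def dP {A : Type*} [Fintype A] [DecidableEq A] (p : ℝ) (col : A → A → EColor) (v : A) : ℝ :=
  ∑ u ∈ Finset.univ.filter (fun u => u ≠ v), wval p (col v u)

/-- The maximum `p`-degree of a colored graph. -/
noncomputable def maxDP {A : Type*} [Fintype A] [DecidableEq A] (p : ℝ)
    (col : A → A → EColor) : ℝ :=
  sSup (Set.range (dP p col))

/-!
In a `p`-core CRG the optimality conditions say exactly that every row of `M_K(p)` has the same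
`μ`-weighted sum `g_K(p)`. The `p`-degree of a vertex of `K[μ,n]` lying in class `x` is
`∑_y ⌊μ(y)n⌋ M(x,y) - M(x,x)`, which differs from `n ∑_y M(x,y) μ(y) = g_K(p) n` by at most
`|V(K)| + 1`; likewise `|K[μ,n]|` differs from `n` by at most `|V(K)|`. Dividing by `n` gives the limit.
-/

open Finset Filter Topology

section Weights

variable {p : ℝ}

lemma wval_nonneg (hp0 : 0 ≤ p) (hp1 : p ≤ 1) (c : EColor) : 0 ≤ wval p c := by
  cases c <;> simp only [wval] <;> linarith

lemma wval_le_one (hp0 : 0 ≤ p) (hp1 : p ≤ 1) (c : EColor) : wval p c ≤ 1 := by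
  cases c <;> simp only [wval] <;> linarith

variable {V : Type*} [DecidableEq V] (vb : V → Bool) (ec : V → V → EColor)

lemma Mmat_nonneg (hp0 : 0 ≤ p) (hp1 : p ≤ 1) (x y : V) : 0 ≤ Mmat vb ec p x y := by
  unfold Mmat
  split_ifs
  · linarith
  · exact hp0
  · exact wval_nonneg hp0 hp1 _

lemma Mmat_le_one (hp0 : 0 ≤ p) (hp1 : p ≤ 1) (x y : V) : Mmat vb ec p x y ≤ 1 := by
  unfold Mmat
  split_ifs
  · linarith
  · exact hp1
  · exact wval_le_one hp0 hp1 _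

end Weights

section Core

variable {V : Type*} [Fintype V] [DecidableEq V] {vb : V → Bool} {ec : V → V → EColor}
  {p : ℝ} {μ : V → ℝ}

lemma grayDeg_eq_sum_filter (x : V) :
    grayDeg ec μ x = ∑ y ∈ univ.erase x, if ec x y = EColor.gray then μ y else 0 := by
  rw [grayDeg, ← sum_filter]
  congr 1
  ext y
  simp [and_comm]

lemma sum_Mmat_mul_eq (hnb : ∀ x y, x ≠ y → ec x y ≠ EColor.black) (x : V) :
    ∑ y, Mmat vb ec p x y * μ y
      = Mmat vb ec p x x * μ x + p * (∑ y ∈ univ.erase x, μ y - grayDeg ec μ x) := by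
  have hoff : ∀ y ∈ univ.erase x, Mmat vb ec p x y * μ y
      = p * μ y - p * (if ec x y = EColor.gray then μ y else 0) := by
    intro y hy
    have hxy : x ≠ y := (ne_of_mem_erase hy).symm
    cases hec : ec x y with
    | black => exact absurd hec (hnb x y hxy)
    | white => simp [Mmat, hxy, hec, wval]
    | gray => simp [Mmat, hxy, hec, wval]
  rw [← add_sum_erase _ _ (mem_univ x), sum_congr rfl hoff, sum_sub_distrib, ← mul_sum,
    ← mul_sum, grayDeg_eq_sum_filter, mul_sub]

lemma grayDeg_eq_sum_erase_of_white (hnb : ∀ x y, x ≠ y → ec x y ≠ EColor.black)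
    (hwe : ∀ x y, x ≠ y → ec x y = EColor.white → vb x = true ∧ vb y = true)
    {x : V} (hx : vb x = false) : grayDeg ec μ x = ∑ y ∈ univ.erase x, μ y := by
  rw [grayDeg_eq_sum_filter]
  refine sum_congr rfl fun y hy => ?_
  have hxy : x ≠ y := (ne_of_mem_erase hy).symm
  cases hec : ec x y with
  | black => exact absurd hec (hnb x y hxy)
  | white => simp [(hwe x y hxy hec).1] at hx
  | gray => rfl

theorem sum_Mmat_mul_eq_of_core {g : ℝ} (hp0 : 0 < p)
    (hnb : ∀ x y, x ≠ y → ec x y ≠ EColor.black)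
    (hwe : ∀ x y, x ≠ y → ec x y = EColor.white → vb x = true ∧ vb y = true)
    (hμ : IsProb μ)
    (hwhite : ∀ u, vb u = false → μ u = g / p)
    (hblack : ∀ u, vb u = true →
      grayDeg ec μ u = (p - g) / p + ((1 - 2 * p) / p) * μ u) (x : V) :
    ∑ y, Mmat vb ec p x y * μ y = g := by
  rw [sum_Mmat_mul_eq hnb]
  cases hx : vb x with
  | true =>
    have hrest : ∑ y ∈ univ.erase x, μ y = 1 - μ x := by
      rw [← hμ.2, ← add_sum_erase _ _ (mem_univ x), add_sub_cancel_left]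
    rw [hrest, hblack x hx]
    simp only [Mmat, if_true, hx]
    field_simp
    ring
  | false =>
    rw [grayDeg_eq_sum_erase_of_white hnb hwe hx, sub_self, mul_zero, add_zero, hwhite x hx]
    simp only [Mmat, if_true, hx, Bool.false_eq_true, if_false]
    field_simp

end Core

section Floor

variable {V : Type*} [Fintype V]

lemma abs_sum_floor_mul_sub_le {μ w : V → ℝ} (hμ : ∀ x, 0 ≤ μ x) (hw0 : ∀ y, 0 ≤ w y)
    (hw1 : ∀ y, w y ≤ 1) (n : ℕ) :
    |∑ y, (⌊μ y * (n : ℝ)⌋₊ : ℝ) * w y - ∑ y, μ y * n * w y| ≤ Fintype.card V := by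
  rw [← sum_sub_distrib]
  calc |∑ y, ((⌊μ y * (n : ℝ)⌋₊ : ℝ) * w y - μ y * n * w y)|
      ≤ ∑ y, |(⌊μ y * (n : ℝ)⌋₊ : ℝ) * w y - μ y * n * w y| := abs_sum_le_sum_abs _ _
    _ ≤ ∑ _y : V, (1 : ℝ) := by
      refine sum_le_sum fun y _ => ?_
      have hfl : |(⌊μ y * (n : ℝ)⌋₊ : ℝ) - μ y * n| ≤ 1 :=
        abs_le.mpr ⟨by linarith [Nat.sub_one_lt_floor (μ y * n)],
          by linarith [Nat.floor_le (mul_nonneg (hμ y) n.cast_nonneg)]⟩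
      rw [← sub_mul, abs_mul, abs_of_nonneg (hw0 y)]
      nlinarith [hw0 y, hw1 y, abs_nonneg ((⌊μ y * (n : ℝ)⌋₊ : ℝ) - μ y * n)]
    _ = Fintype.card V := by simp

lemma abs_sum_floor_sub_le {μ : V → ℝ} (hμ : IsProb μ) (n : ℕ) :
    |∑ x, (⌊μ x * (n : ℝ)⌋₊ : ℝ) - 1 * n| ≤ Fintype.card V := by
  have h := abs_sum_floor_mul_sub_le (w := fun _ => 1) hμ.1 (fun _ => zero_le_one)
    (fun _ => le_rfl) n
  simpa only [mul_one, ← sum_mul, hμ.2] using h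

lemma eventually_nonempty_sblow_vertex {μ : V → ℝ} (hμ : IsProb μ) :
    ∀ᶠ n : ℕ in atTop, Nonempty ((x : V) × Fin ⌊μ x * (n : ℝ)⌋₊) := by
  obtain ⟨x, -, hx⟩ : ∃ x ∈ univ, (0 : ℝ) < μ x :=
    exists_lt_of_sum_lt (by simp [hμ.2])
  have hlarge : ∀ᶠ n : ℕ in atTop, (1 : ℝ) ≤ μ x * n :=
    (tendsto_natCast_atTop_atTop.const_mul_atTop hx).eventually_ge_atTop 1
  filter_upwards [hlarge] with n hn
  exact ⟨⟨x, ⟨0, Nat.le_floor (by exact_mod_cast hn)⟩⟩⟩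

end Floor

section BlowUp

variable {V : Type*} [Fintype V] [DecidableEq V]

lemma dP_sblow (vb : V → Bool) (ec : V → V → EColor) (p : ℝ) (μ : V → ℝ) (n : ℕ)
    (v : (x : V) × Fin ⌊μ x * (n : ℝ)⌋₊) :
    dP p (sblow vb ec μ n) v
      = ∑ y, (⌊μ y * (n : ℝ)⌋₊ : ℝ) * Mmat vb ec p v.1 y - Mmat vb ec p v.1 v.1 := by
  have hw : ∀ u : (x : V) × Fin ⌊μ x * (n : ℝ)⌋₊,
      wval p (sblow vb ec μ n v u) = Mmat vb ec p v.1 u.1 := by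
    intro u
    by_cases h : v.1 = u.1
    · cases hb : vb u.1 <;> simp [sblow, Mmat, h, hb, wval]
    · simp [sblow, Mmat, h]
  rw [dP, filter_ne', sum_congr rfl fun u _ => hw u, sum_erase_eq_sub (mem_univ v),
    ← univ_sigma_univ, sum_sigma]
  simp [sum_const, mul_comm]

lemma abs_dP_sblow_sub_le {vb : V → Bool} {ec : V → V → EColor} {p g : ℝ} {μ : V → ℝ}
    (hp0 : 0 ≤ p) (hp1 : p ≤ 1) (hμ : ∀ x, 0 ≤ μ x)
    (hrow : ∀ x, ∑ y, Mmat vb ec p x y * μ y = g) (n : ℕ)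
    (v : (x : V) × Fin ⌊μ x * (n : ℝ)⌋₊) :
    |dP p (sblow vb ec μ n) v - g * n| ≤ Fintype.card V + 1 := by
  have hmass : ∑ y, μ y * n * Mmat vb ec p v.1 y = g * n := by
    rw [← hrow v.1, sum_mul]
    exact sum_congr rfl fun y _ => by ring
  have hsum := abs_sum_floor_mul_sub_le hμ (Mmat_nonneg vb ec hp0 hp1 v.1)
    (Mmat_le_one vb ec hp0 hp1 v.1) n
  rw [hmass] at hsum
  rw [dP_sblow]
  have h0 := Mmat_nonneg vb ec hp0 hp1 v.1 v.1
  have h1 := Mmat_le_one vb ec hp0 hp1 v.1 v.1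
  rw [abs_le] at hsum ⊢
  constructor <;> linarith [hsum.1, hsum.2]

end BlowUp

lemma abs_maxDP_sub_le {A : Type*} [Fintype A] [DecidableEq A] [Nonempty A] (p : ℝ)
    (col : A → A → EColor) {c C : ℝ} (h : ∀ v, |dP p col v - c| ≤ C) :
    |maxDP p col - c| ≤ C := by
  change |(⨆ v, dP p col v) - c| ≤ C
  obtain ⟨v₀⟩ := ‹Nonempty A›
  have hlo := (abs_le.mp (h v₀)).1
  have hle : dP p col v₀ ≤ ⨆ v, dP p col v := le_ciSup (Finite.bddAbove_range _) v₀
  have hup : (⨆ v, dP p col v) ≤ c + C :=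
    ciSup_le fun v => by linarith [(abs_le.mp (h v)).2]
  rw [abs_le]
  constructor <;> linarith

lemma tendsto_div_natCast_of_abs_sub_le {a : ℕ → ℝ} {g C : ℝ}
    (h : ∀ᶠ n in atTop, |a n - g * n| ≤ C) :
    Tendsto (fun n : ℕ => a n / n) atTop (𝓝 g) := by
  rw [← tendsto_sub_nhds_zero_iff]
  refine squeeze_zero_norm' ?_ (tendsto_const_div_atTop_nhds_zero_nat C)
  filter_upwards [h, eventually_gt_atTop 0] with n hn hpos
  have hn0 : (0 : ℝ) < n := by exact_mod_cast hpos
  rw [Real.norm_eq_abs, div_sub' hn0.ne', abs_div, abs_of_pos hn0, mul_comm]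
  gcongr

theorem tendsto_maxDP_sblow_div_card {V : Type*} [Fintype V] [DecidableEq V]
    {vb : V → Bool} {ec : V → V → EColor} {p g : ℝ} {μ : V → ℝ}
    (hp0 : 0 ≤ p) (hp1 : p ≤ 1) (hμ : IsProb μ)
    (hrow : ∀ x, ∑ y, Mmat vb ec p x y * μ y = g) :
    Tendsto (fun n : ℕ => maxDP p (sblow vb ec μ n) / ∑ x : V, (⌊μ x * (n : ℝ)⌋₊ : ℝ))
      atTop (𝓝 g) := by
  have hdeg : Tendsto (fun n : ℕ => maxDP p (sblow vb ec μ n) / n) atTop (𝓝 g) := by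
    refine tendsto_div_natCast_of_abs_sub_le (C := Fintype.card V + 1) ?_
    filter_upwards [eventually_nonempty_sblow_vertex hμ] with n _
    exact abs_maxDP_sub_le p _ (abs_dP_sblow_sub_le hp0 hp1 hμ.1 hrow n)
  have hsize : Tendsto (fun n : ℕ => (∑ x : V, (⌊μ x * (n : ℝ)⌋₊ : ℝ)) / n) atTop (𝓝 1) :=
    tendsto_div_natCast_of_abs_sub_le (C := Fintype.card V)
      (Eventually.of_forall (abs_sum_floor_sub_le hμ))
  refine (div_one g ▸ hdeg.div hsize one_ne_zero).congr' ?_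
  filter_upwards [eventually_gt_atTop 0] with n hn
  exact div_div_div_cancel_right₀ (by exact_mod_cast hn.ne') _ _

theorem stmt13_general {V : Type*} [Fintype V] [DecidableEq V]
    (vb : V → Bool) (ec : V → V → EColor) (p g : ℝ) (hp0 : 0 < p) (hp2 : p ≤ 1 / 2)
    (hnb : ∀ x y, x ≠ y → ec x y ≠ EColor.black)
    (hwe : ∀ x y, x ≠ y → ec x y = EColor.white → vb x = true ∧ vb y = true)
    (μ : V → ℝ) (hμ : IsProb μ)
    (hwhite : ∀ u, vb u = false → μ u = g / p)
    (hblack : ∀ u, vb u = true →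
      grayDeg ec μ u = (p - g) / p + ((1 - 2 * p) / p) * μ u) :
    Filter.Tendsto
      (fun n : ℕ => maxDP p (sblow vb ec μ n) / ∑ x : V, (⌊μ x * (n : ℝ)⌋₊ : ℝ))
      Filter.atTop (nhds g) :=
  tendsto_maxDP_sblow_div_card hp0.le (by linarith) hμ
    (sum_Mmat_mul_eq_of_core hp0 hnb hwe hμ hwhite hblack)

/-- for `p ∈ (0,1/2]` and a `p`-core CRG `K` with optimizer `μ`,
`Δ_p(K[μ,n])/|K[μ,n]| → g_K(p)` as `n → ∞`. -/
theorem stmt13 {V : Type*} [Fintype V] [DecidableEq V]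
    (vb : V → Bool) (ec : V → V → EColor) (p g : ℝ) (hp0 : 0 < p) (hp2 : p ≤ 1 / 2)
    (hsymm : ∀ a b, ec a b = ec b a)
    (hnb : ∀ x y, x ≠ y → ec x y ≠ EColor.black)
    (hwe : ∀ x y, x ≠ y → ec x y = EColor.white → vb x = true ∧ vb y = true)
    (μ : V → ℝ) (hμ : IsProb μ) (hfull : ∀ x, 0 < μ x)
    (hg : gIs vb ec p g) (hμg : QF vb ec p μ = g)
    (hwhite : ∀ u, vb u = false → μ u = g / p)
    (hblack : ∀ u, vb u = true →
      grayDeg ec μ u = (p - g) / p + ((1 - 2 * p) / p) * μ u) :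
    Filter.Tendsto
      (fun n : ℕ => maxDP p (sblow vb ec μ n) / ∑ x : V, (⌊μ x * (n : ℝ)⌋₊ : ℝ))
      Filter.atTop (nhds g) :=
  stmt13_general vb ec p g hp0 hp2 hnb hwe μ hμ hwhite hblack
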